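/- arXiv:quant-ph/0611281 — 4 statements merged into one kernel-verified Lean document; each statement's English description precedes it below -/
import Mathlib

section
/- Let n ≥ 1 and let C, H_SB, H_0, H_1, …, H_r be n×n complex matrices with H_SB, H_0, …, H_r skew-Hermitian (Hᴴ = −H). Suppose S is a ℂ-linear subspace of the n×n complex matrices such that (i) C ∈ S, (ii) S is closed under X ↦ [H_i, X] for every i ∈ {0,…,r}, and (iii) [X, H_SB] = 0 for every X ∈ S. Then for every finite sequence of durations t_1,…,t_m ∈ ℝ and control coefficients u_k ∈ ℝ^{r+1} (k = 1,…,m), setting A_k = Σ_{i=0}^r u_{k,i} H_i, the propagators P = exp(t_m(A_m + H_SB))···exp(t_1(A_1 + H_SB)) and Q = exp(t_m A_m)···exp(t_1 A_1) satisfy ⟨Pξ, C Pξ⟩ = ⟨Qξ, C Qξ⟩ for every ξ ∈ ℂⁿ. That is, the output y = ⟨ξ(t), C ξ(t)⟩ of the bilinear quantum control system is completely decoupled from the interaction Hamiltonian H_SB under arbitrary piecewise-constant controls. -/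
open Matrix NormedSpace

/-!
Heisenberg picture. The output equals `⟨ξ, Pᴴ C P ξ⟩`, and since every factor `exp B` of `P` is
unitary, `Pᴴ C P` arises from `C` by successive conjugations `X ↦ exp (-B) X exp B`, each of which
is `exp (ad (-B))` applied to `X`. For `B = t (A + H_SB)` and `B' = t A` the derivations `ad B` and
`ad B'` agree on `S` because `H_SB` commutes with `S`, and `ad B'` maps `S` into itself; so the two
exponential series agree on `S` and stay in `S`, and the conjugations with and without `H_SB`
coincide step by step.
-/

namespace ContinuousLinearMap

section Operator

variable {R V : Type*} [Semiring R] [TopologicalSpace V] [AddCommMonoid V] [Module R V]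

theorem mapsTo_pow {S : Set V} {T : V →L[R] V} (hT : Set.MapsTo T S S) (k : ℕ) :
    Set.MapsTo ⇑(T ^ k) S S := by
  induction k with
  | zero => exact Set.mapsTo_id S
  | succ k ih => rw [pow_succ']; exact hT.comp ih

theorem eqOn_pow {S : Set V} {T T' : V →L[R] V} (heq : Set.EqOn T T' S)
    (hT' : Set.MapsTo T' S S) (k : ℕ) : Set.EqOn ⇑(T ^ k) ⇑(T' ^ k) S := by
  induction k with
  | zero => exact Set.eqOn_refl _ _
  | succ k ih =>
    rw [pow_succ', pow_succ']
    exact ih.comp_left.trans (heq.comp_right (mapsTo_pow hT' k))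

end Operator

section Exp

variable {𝕂 V : Type*} [RCLike 𝕂] [NormedAddCommGroup V] [NormedSpace 𝕂 V] [CompleteSpace V]

theorem exp_apply (T : V →L[𝕂] V) (x : V) :
    exp T x = ∑' k, (k.factorial⁻¹ : 𝕂) • (T ^ k) x := by
  rw [exp_eq_tsum 𝕂]
  exact (apply 𝕂 V x).map_tsum (expSeries_summable' T)

theorem mapsTo_exp {S : Submodule 𝕂 V} (hS : IsClosed (S : Set V)) {T : V →L[𝕂] V}
    (hT : Set.MapsTo T S S) : Set.MapsTo ⇑(exp T) S S := fun x hx => by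
  rw [exp_apply]
  exact tsum_mem hS fun k => S.smul_mem _ (mapsTo_pow hT k hx)

theorem eqOn_exp {S : Set V} {T T' : V →L[𝕂] V} (heq : Set.EqOn T T' S)
    (hT' : Set.MapsTo T' S S) : Set.EqOn ⇑(exp T) ⇑(exp T') S := fun x hx => by
  rw [exp_apply, exp_apply]
  exact tsum_congr fun k => by rw [eqOn_pow heq hT' k hx]

end Exp

section Algebra

variable (𝕂 𝔸 : Type*) [RCLike 𝕂] [NormedRing 𝔸] [NormedAlgebra 𝕂 𝔸]

noncomputable def ad : 𝔸 →L[𝕂] 𝔸 →L[𝕂] 𝔸 := mul 𝕂 𝔸 - (mul 𝕂 𝔸).flip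

variable {𝕂 𝔸}

@[simp] theorem ad_apply (a x : 𝔸) : ad 𝕂 𝔸 a x = a * x - x * a := rfl

theorem mapsTo_ad_neg {S : Submodule 𝕂 𝔸} {b : 𝔸} (hb : Set.MapsTo (ad 𝕂 𝔸 b) S S) :
    Set.MapsTo (ad 𝕂 𝔸 (-b)) S S := fun y hy => by
  simpa only [map_neg, _root_.neg_apply, SetLike.mem_coe] using S.neg_mem (hb hy)

variable [CompleteSpace 𝔸]

theorem exp_mul_apply (a x : 𝔸) : exp (mul 𝕂 𝔸 a) x = exp a * x := by
  have hpow (k : ℕ) : (mul 𝕂 𝔸 a ^ k) x = a ^ k * x := by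
    induction k with
    | zero => simp
    | succ k ih => rw [pow_succ', mul_apply_eq_comp, ih, mul_apply', pow_succ', mul_assoc]
  rw [exp_apply, exp_eq_tsum 𝕂]
  simp only [hpow, ← smul_mul_assoc]
  exact (expSeries_summable' a).tsum_mul_right x

theorem exp_flip_mul_apply (a x : 𝔸) : exp ((mul 𝕂 𝔸).flip a) x = x * exp a := by
  have hpow (k : ℕ) : ((mul 𝕂 𝔸).flip a ^ k) x = x * a ^ k := by
    induction k with
    | zero => simp
    | succ k ih =>
      rw [pow_succ', mul_apply_eq_comp, ih, flip_apply, mul_apply', pow_succ, mul_assoc]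
  rw [exp_apply, exp_eq_tsum 𝕂]
  simp only [hpow, ← mul_smul_comm]
  exact (expSeries_summable' a).tsum_mul_left x

theorem exp_ad_apply (a x : 𝔸) : exp (ad 𝕂 𝔸 a) x = exp a * x * exp (-a) := by
  let : NormedAlgebra ℚ (𝔸 →L[𝕂] 𝔸) := .restrictScalars ℚ 𝕂 _
  have hcomm : Commute (mul 𝕂 𝔸 a) ((mul 𝕂 𝔸).flip (-a)) :=
    ext fun y => (mul_assoc a y (-a)).symm
  have hsplit : ad 𝕂 𝔸 a = mul 𝕂 𝔸 a + (mul 𝕂 𝔸).flip (-a) := by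
    ext y
    simp [sub_eq_add_neg]
  rw [hsplit, exp_add_of_commute hcomm, mul_apply_eq_comp, exp_flip_mul_apply, exp_mul_apply,
    mul_assoc]

theorem exp_neg_mul_mul_exp_eq_of_eqOn {S : Submodule 𝕂 𝔸} {a b : 𝔸}
    (heq : Set.EqOn (ad 𝕂 𝔸 a) (ad 𝕂 𝔸 b) S) (hb : Set.MapsTo (ad 𝕂 𝔸 b) S S) {x : 𝔸}
    (hx : x ∈ S) : exp (-a) * x * exp a = exp (-b) * x * exp b := by
  have hneg : Set.EqOn (ad 𝕂 𝔸 (-a)) (ad 𝕂 𝔸 (-b)) S := fun y hy => by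
    simp only [map_neg, _root_.neg_apply, heq hy]
  simpa only [exp_ad_apply, neg_neg] using eqOn_exp hneg (mapsTo_ad_neg hb) hx

theorem exp_neg_mul_mul_exp_mem {S : Submodule 𝕂 𝔸} (hS : IsClosed (S : Set 𝔸)) {b : 𝔸}
    (hb : Set.MapsTo (ad 𝕂 𝔸 b) S S) {x : 𝔸} (hx : x ∈ S) : exp (-b) * x * exp b ∈ S := by
  simpa only [exp_ad_apply, neg_neg, SetLike.mem_coe] using mapsTo_exp hS (mapsTo_ad_neg hb) hx

end Algebra

end ContinuousLinearMap

section StarConj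

variable {R : Type*}

def starConj [Mul R] [Star R] (U x : R) : R := star U * x * U

theorem starConj_mul [Monoid R] [StarMul R] (U V : R) :
    starConj (U * V) = starConj V ∘ starConj U := by
  funext x
  simp only [starConj, star_mul, Function.comp_apply, mul_assoc]

theorem starConj_exp_of_star_eq_neg [Ring R] [StarRing R] [TopologicalSpace R]
    [IsTopologicalRing R] [T2Space R] [ContinuousStar R] {B : R} (hB : star B = -B) (x : R) :
    starConj (exp B) x = exp (-B) * x * exp B := by
  rw [starConj, star_exp, hB]

variable [Monoid R] [StarMul R] {ι : Type*} {S : Set R}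

theorem eqOn_starConj_list_prod {u v : ι → R}
    (heq : ∀ i, Set.EqOn (starConj (u i)) (starConj (v i)) S)
    (hv : ∀ i, Set.MapsTo (starConj (v i)) S S) (l : List ι) :
    Set.EqOn (starConj (l.map u).prod) (starConj (l.map v).prod) S := by
  induction l with
  | nil => exact Set.eqOn_refl _ _
  | cons i l ih =>
    simp only [List.map_cons, List.prod_cons, starConj_mul]
    exact (heq i).comp_left.trans (ih.comp_right (hv i))

end StarConj

theorem Matrix.star_mulVec_dotProduct_mulVec_mulVec {m R : Type*} [Fintype m] [CommSemiring R]
    [StarRing R] (P C : Matrix m m R) (ξ : m → R) :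
    star (P *ᵥ ξ) ⬝ᵥ C *ᵥ (P *ᵥ ξ) = star ξ ⬝ᵥ starConj P C *ᵥ ξ := by
  simp only [starConj, star_mulVec, mulVec_mulVec, dotProduct_mulVec, vecMul_vecMul,
    star_eq_conjTranspose, mul_assoc]

section SkewHermitian

variable {𝕂 m : Type*} [RCLike 𝕂] [Fintype m] [DecidableEq m] {S : Submodule 𝕂 (Matrix m m 𝕂)}

-- Any matrix norm will do for the Banach-algebra lemmas: all of them induce the usual topology.
open scoped Matrix.Norms.Operator in
theorem Matrix.mapsTo_starConj_exp {a : Matrix m m 𝕂} (ha : aᴴ = -a)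
    (haS : ∀ X ∈ S, a * X - X * a ∈ S) : Set.MapsTo (starConj (exp a)) S S := fun X hX => by
  rw [starConj_exp_of_star_eq_neg ha]
  exact ContinuousLinearMap.exp_neg_mul_mul_exp_mem S.closed_of_finiteDimensional
    (fun Y hY => by simpa using haS Y hY) hX

open scoped Matrix.Norms.Operator in
theorem Matrix.eqOn_starConj_exp_add {a c : Matrix m m 𝕂} (ha : aᴴ = -a) (hc : cᴴ = -c)
    (haS : ∀ X ∈ S, a * X - X * a ∈ S) (hcS : ∀ X ∈ S, X * c - c * X = 0) :
    Set.EqOn (starConj (exp (a + c))) (starConj (exp a)) S := fun X hX => by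
  have hac : star (a + c) = -(a + c) := by
    rw [star_eq_conjTranspose, conjTranspose_add, ha, hc, neg_add]
  rw [starConj_exp_of_star_eq_neg hac, starConj_exp_of_star_eq_neg ha]
  refine ContinuousLinearMap.exp_neg_mul_mul_exp_eq_of_eqOn (fun Y hY => ?_)
    (fun Y hY => by simpa using haS Y hY) hX
  have hcY : c * Y - Y * c = 0 := by rw [← neg_sub, hcS Y hY, neg_zero]
  simp only [map_add, _root_.add_apply, ContinuousLinearMap.ad_apply, hcY, add_zero]

end SkewHermitian

theorem open_loop_decoupling_general
    (n r : ℕ)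
    (C HSB : Matrix (Fin n) (Fin n) ℂ) (H : Fin (r + 1) → Matrix (Fin n) (Fin n) ℂ)
    (hHSB_skew : HSBᴴ = -HSB) (hH_skew : ∀ i, (H i)ᴴ = -(H i))
    (S : Submodule ℂ (Matrix (Fin n) (Fin n) ℂ))
    (hC : C ∈ S)
    (hclosed : ∀ i : Fin (r + 1), ∀ X ∈ S, H i * X - X * H i ∈ S)
    (hcomm : ∀ X ∈ S, X * HSB - HSB * X = 0)
    (m : ℕ) (t : Fin m → ℝ) (u : Fin m → Fin (r + 1) → ℝ) :
    ∀ ξ : Fin n → ℂ,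
      let A : Fin m → Matrix (Fin n) (Fin n) ℂ := fun k => ∑ i, (u k i : ℂ) • H i
      let P : Matrix (Fin n) (Fin n) ℂ :=
        ((List.ofFn fun k : Fin m => NormedSpace.exp ((t k : ℂ) • (A k + HSB))).reverse).prod
      let Q : Matrix (Fin n) (Fin n) ℂ :=
        ((List.ofFn fun k : Fin m => NormedSpace.exp ((t k : ℂ) • A k)).reverse).prod
      star (P.mulVec ξ) ⬝ᵥ C.mulVec (P.mulVec ξ) =
        star (Q.mulVec ξ) ⬝ᵥ C.mulVec (Q.mulVec ξ) := by
  intro ξ A P Q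
  have htA_skew (k : Fin m) : ((t k : ℂ) • A k)ᴴ = -((t k : ℂ) • A k) := by
    simp [A, conjTranspose_sum, hH_skew]
  have htHSB_skew (k : Fin m) : ((t k : ℂ) • HSB)ᴴ = -((t k : ℂ) • HSB) := by
    simp [hHSB_skew]
  have htA_S (k : Fin m) : ∀ X ∈ S, (t k : ℂ) • A k * X - X * ((t k : ℂ) • A k) ∈ S := by
    intro X hX
    have hexpand : (t k : ℂ) • A k * X - X * ((t k : ℂ) • A k) =
        (t k : ℂ) • ∑ i, (u k i : ℂ) • (H i * X - X * H i) := by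
      simp only [A, smul_mul_assoc, mul_smul_comm, Finset.sum_mul, Finset.mul_sum, smul_sub,
        Finset.smul_sum, Finset.sum_sub_distrib]
    rw [hexpand]
    exact S.smul_mem _ (S.sum_mem fun i _ => S.smul_mem _ (hclosed i X hX))
  have htHSB_S (k : Fin m) : ∀ X ∈ S, X * ((t k : ℂ) • HSB) - (t k : ℂ) • HSB * X = 0 := by
    intro X hX
    rw [mul_smul_comm, smul_mul_assoc, ← smul_sub, hcomm X hX, smul_zero]
  have hPQ : starConj P C = starConj Q C := by
    simp only [P, Q, List.ofFn_eq_map, ← List.map_reverse, smul_add]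
    exact eqOn_starConj_list_prod
      (fun k => eqOn_starConj_exp_add (htA_skew k) (htHSB_skew k) (htA_S k) (htHSB_S k))
      (fun k => mapsTo_starConj_exp (htA_skew k) (htA_S k)) _ hC
  simp only [star_mulVec_dotProduct_mulVec_mulVec, hPQ]

/-- Open-loop decoupling (Theorem 1, Case I, finite-dimensional time-independent form):
if a ℂ-linear subspace `S` of matrices contains `C`, is closed under commutation with every
control/drift Hamiltonian `H i`, and every element of `S` commutes with the interaction
Hamiltonian `H_SB`, then the output `y = ⟨ξ(t), C ξ(t)⟩` is unchanged by removing `H_SB`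
from the dynamics, for arbitrary piecewise-constant controls. -/
theorem open_loop_decoupling
    (n r : ℕ) (hn : 1 ≤ n)
    (C HSB : Matrix (Fin n) (Fin n) ℂ) (H : Fin (r + 1) → Matrix (Fin n) (Fin n) ℂ)
    (hHSB_skew : HSBᴴ = -HSB) (hH_skew : ∀ i, (H i)ᴴ = -(H i))
    (S : Submodule ℂ (Matrix (Fin n) (Fin n) ℂ))
    (hC : C ∈ S)
    (hclosed : ∀ i : Fin (r + 1), ∀ X ∈ S, H i * X - X * H i ∈ S)
    (hcomm : ∀ X ∈ S, X * HSB - HSB * X = 0)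
    (m : ℕ) (t : Fin m → ℝ) (u : Fin m → Fin (r + 1) → ℝ) :
    ∀ ξ : Fin n → ℂ,
      let A : Fin m → Matrix (Fin n) (Fin n) ℂ := fun k => ∑ i, (u k i : ℂ) • H i
      let P : Matrix (Fin n) (Fin n) ℂ :=
        ((List.ofFn fun k : Fin m => NormedSpace.exp ((t k : ℂ) • (A k + HSB))).reverse).prod
      let Q : Matrix (Fin n) (Fin n) ℂ :=
        ((List.ofFn fun k : Fin m => NormedSpace.exp ((t k : ℂ) • A k)).reverse).prod
      star (P.mulVec ξ) ⬝ᵥ C.mulVec (P.mulVec ξ) =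
        star (Q.mulVec ξ) ⬝ᵥ C.mulVec (Q.mulVec ξ) :=
  open_loop_decoupling_general n r C HSB H hHSB_skew hH_skew S hC hclosed hcomm m t u
end

section
/- Let E be a finite-dimensional real normed vector space, let K_0, K_1, …, K_r : E → E be smooth (C^∞) vector fields, and let y : E → ℂ be a smooth function. Let 𝒪 be the smallest set of smooth functions E → ℂ that contains y and is closed under every Lie derivative f ↦ L_{K_i} f (where (L_V f)(x) = (D f)(x)(V(x)) is the derivative of f along V), for i = 0,…,r. Suppose K_τ : E → E is a smooth vector field with L_{K_τ} f = 0 identically for every f ∈ 𝒪 (i.e. K_τ ∈ 𝒪^⊥). Then for every i ∈ {0,…,r} the Lie bracket [K_τ, K_i] also satisfies L_{[K_τ,K_i]} f = 0 identically for every f ∈ 𝒪, i.e. [K_τ, K_i] ∈ 𝒪^⊥. -/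
variable {E : Type*} [NormedAddCommGroup E] [NormedSpace ℝ E]

/-- Lie derivative of a function along a vector field: `(L_V f)(x) = Df(x)(V(x))`. -/
noncomputable def lieDerivFun (V : E → E) (f : E → ℂ) : E → ℂ :=
  fun x => fderiv ℝ f x (V x)

/-- Lie bracket of vector fields: `[V,W](x) = DW(x)(V(x)) − DV(x)(W(x))`. -/
noncomputable def lieBracketVF (V W : E → E) : E → E :=
  fun x => fderiv ℝ W x (V x) - fderiv ℝ V x (W x)

/-- The observation space: the smallest set of functions containing `y` and closed under
the Lie derivatives along the vector fields `K 0, …, K r`. -/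
inductive ObsSpace {r : ℕ} (K : Fin (r + 1) → E → E) (y : E → ℂ) : (E → ℂ) → Prop
  | base : ObsSpace K y y
  | lie (i : Fin (r + 1)) (f : E → ℂ) : ObsSpace K y f → ObsSpace K y (lieDerivFun (K i) f)

lemma lieDerivFun_contDiff {V : E → E} {f : E → ℂ} (hV : ContDiff ℝ (⊤ : ℕ∞) V)
    (hf : ContDiff ℝ (⊤ : ℕ∞) f) : ContDiff ℝ (⊤ : ℕ∞) (lieDerivFun V f) := by
  exact (hf.fderiv_right (by simp)).clm_apply hV

lemma lie_comm {f : E → ℂ} (hf : ContDiff ℝ (⊤ : ℕ∞) f) {V W : E → E}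
    (hV : ContDiff ℝ (⊤ : ℕ∞) V) (hW : ContDiff ℝ (⊤ : ℕ∞) W) (x : E) :
    lieDerivFun (lieBracketVF V W) f x
      = lieDerivFun V (lieDerivFun W f) x - lieDerivFun W (lieDerivFun V f) x := by
  have hf' : ContDiff ℝ (⊤ : ℕ∞) (fderiv ℝ f) := hf.fderiv_right (by simp)
  have hsymm : IsSymmSndFDerivAt ℝ f x := by
    apply hf.contDiffAt.isSymmSndFDerivAt
    rw [minSmoothness_of_isRCLikeNormedField]
    exact WithTop.coe_le_coe.mpr le_top
  have key : ∀ (U : E → E), ContDiff ℝ (⊤ : ℕ∞) U → ∀ v : E,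
      fderiv ℝ (lieDerivFun U f) x v
        = fderiv ℝ f x (fderiv ℝ U x v) + fderiv ℝ (fderiv ℝ f) x v (U x) := by
    intro U hU v
    have h := fderiv_clm_apply (c := fderiv ℝ f) (u := U)
      (hf'.differentiable (by simp) x) (hU.differentiable (by simp) x)
    have : fderiv ℝ (lieDerivFun U f) x = fderiv ℝ (fun y => fderiv ℝ f y (U y)) x := rfl
    rw [this, h]; rfl
  simp only [lieDerivFun, lieBracketVF, key W hW (V x), key V hV (W x), map_sub]
  rw [hsymm (V x) (W x)]
  ring

/-- Invariance of the orthogonal complement of the observation space: if the smooth vector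
field `K_τ` annihilates every function of the observation space, then so does its Lie
bracket `[K_τ, K_i]` with any drift/control vector field. -/
theorem obs_space_perp_invariant
    [FiniteDimensional ℝ E] {r : ℕ}
    (K : Fin (r + 1) → E → E) (hK : ∀ i, ContDiff ℝ (⊤ : ℕ∞) (K i))
    (y : E → ℂ) (hy : ContDiff ℝ (⊤ : ℕ∞) y)
    (Kτ : E → E) (hKτ : ContDiff ℝ (⊤ : ℕ∞) Kτ)
    (hperp : ∀ f, ObsSpace K y f → ∀ x, lieDerivFun Kτ f x = 0) :
    ∀ i : Fin (r + 1), ∀ f, ObsSpace K y f →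
      ∀ x, lieDerivFun (lieBracketVF Kτ (K i)) f x = 0 := by
  intro i f hf x
  have hfs : ContDiff ℝ (⊤ : ℕ∞) f := by
    induction hf with
    | base => exact hy
    | lie j g hg ih => exact lieDerivFun_contDiff (hK j) ih
  rw [lie_comm hfs hKτ (hK i) x]
  have h1 : lieDerivFun Kτ (lieDerivFun (K i) f) x = 0 :=
    hperp _ (ObsSpace.lie i f hf) x
  have h2 : lieDerivFun Kτ f = fun _ => (0 : ℂ) := funext (hperp f hf)
  rw [h1, h2]
  simp [lieDerivFun]
end

section
/- Let E be a finite-dimensional real normed vector space, let K_0, K_1, …, K_r : E → E be smooth vector fields, and let Δ assign to each x ∈ E a linear subspace Δ(x) ⊆ E. Let G(x) = span_ℝ{K_1(x), …, K_r(x)}. Suppose α : E → ℝ^r and β : E → ℝ^{r×r} are smooth with β(x) invertible for every x, and define the closed-loop vector fields K̃_0 = K_0 + Σ_{j=1}^r α_j K_j and K̃_i = Σ_{j=1}^r β_{ij} K_j for i = 1,…,r. If for every smooth vector field τ with τ(x) ∈ Δ(x) for all x one has [K̃_i, τ](x) ∈ Δ(x) and [K̃_0, τ](x) ∈ Δ(x)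 for all x and all i = 1,…,r (Δ is invariant under the closed-loop fields), then for every such smooth section τ of Δ and every j ∈ {0,1,…,r}, [K_j, τ](x) ∈ Δ(x) + G(x) for all x. -/
variable {E : Type*} [NormedAddCommGroup E] [NormedSpace ℝ E]

lemma bracket_combo {r : ℕ}
    (f : Fin r → E → ℝ) (V : Fin r → E → E)
    (hf : ∀ j, ContDiff ℝ (⊤ : ℕ∞) (f j)) (hV : ∀ j, ContDiff ℝ (⊤ : ℕ∞) (V j))
    (τ : E → E) (hτ : ContDiff ℝ (⊤ : ℕ∞) τ) (x : E) :
    lieBracketVF (fun y => ∑ j, f j y • V j y) τ x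
      = ∑ j, (f j x • lieBracketVF (V j) τ x - (fderiv ℝ (f j) x (τ x)) • V j x) := by
  have hdf : ∀ j, DifferentiableAt ℝ (f j) x := fun j => (hf j).differentiable (by simp) x
  have hdV : ∀ j, DifferentiableAt ℝ (V j) x := fun j => (hV j).differentiable (by simp) x
  have hsum : fderiv ℝ (fun y => ∑ j, f j y • V j y) x
      = ∑ j, (f j x • fderiv ℝ (V j) x + (fderiv ℝ (f j) x).smulRight (V j x)) := by
    rw [fderiv_fun_sum (A := fun j y => f j y • V j y) (fun j _ => (hdf j).smul (hdV j))]
    exact Finset.sum_congr rfl fun j _ => fderiv_fun_smul (hdf j) (hdV j)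
  simp only [lieBracketVF, hsum, map_sum, map_smul, ContinuousLinearMap.sum_apply,
    ContinuousLinearMap.add_apply, ContinuousLinearMap.smul_apply,
    ContinuousLinearMap.smulRight_apply, smul_sub]
  rw [← Finset.sum_sub_distrib]
  exact Finset.sum_congr rfl fun j _ => by abel

lemma bracket_add (V W τ : E → E) (x : E)
    (hV : DifferentiableAt ℝ V x) (hW : DifferentiableAt ℝ W x) :
    lieBracketVF (fun y => V y + W y) τ x
      = lieBracketVF V τ x + lieBracketVF W τ x := by
  simp only [lieBracketVF, fderiv_fun_add hV hW, ContinuousLinearMap.add_apply, map_add]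
  abel

/-- Necessity direction of controlled invariance (Lemma 3): if the distribution `Δ` is
invariant under the closed-loop vector fields `Kc_0 = K_0 + Σ α_j K_j` and
`Kc_i = Σ_j β_{ij} K_j` for some smooth feedback pair `(α, β)` with `β` pointwise
nonsingular, then `[K_j, Δ] ⊆ Δ + G` for every `j ∈ {0,…,r}`, where
`G = span{K_1,…,K_r}`. -/
theorem controlled_invariance_necessity
    [FiniteDimensional ℝ E] {r : ℕ}
    (K0 : E → E) (K : Fin r → E → E)
    (hK0 : ContDiff ℝ (⊤ : ℕ∞) K0) (hK : ∀ i, ContDiff ℝ (⊤ : ℕ∞) (K i))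
    (Δ : E → Submodule ℝ E)
    (α : E → Fin r → ℝ) (β : E → Fin r → Fin r → ℝ)
    (hα : ContDiff ℝ (⊤ : ℕ∞) α) (hβ : ContDiff ℝ (⊤ : ℕ∞) β)
    (hβinv : ∀ x, IsUnit (Matrix.of (β x)))
    -- the closed-loop vector fields
    (Kc0 : E → E) (hKc0 : Kc0 = fun x => K0 x + ∑ j, α x j • K j x)
    (Kc : Fin r → E → E) (hKc : ∀ i, Kc i = fun x => ∑ j, β x i j • K j x)
    -- Δ is invariant under the closed-loop vector fields
    (hinv0 : ∀ τ : E → E, ContDiff ℝ (⊤ : ℕ∞) τ → (∀ x, τ x ∈ Δ x) →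
      ∀ x, lieBracketVF Kc0 τ x ∈ Δ x)
    (hinv : ∀ τ : E → E, ContDiff ℝ (⊤ : ℕ∞) τ → (∀ x, τ x ∈ Δ x) →
      ∀ i, ∀ x, lieBracketVF (Kc i) τ x ∈ Δ x) :
    ∀ τ : E → E, ContDiff ℝ (⊤ : ℕ∞) τ → (∀ x, τ x ∈ Δ x) →
      (∀ x, lieBracketVF K0 τ x ∈
        Δ x ⊔ Submodule.span ℝ (Set.range fun i : Fin r => K i x)) ∧
      (∀ i, ∀ x, lieBracketVF (K i) τ x ∈
        Δ x ⊔ Submodule.span ℝ (Set.range fun i : Fin r => K i x)) := by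
  intro τ hτ hmem
  set S : E → Submodule ℝ E :=
    fun x => Δ x ⊔ Submodule.span ℝ (Set.range fun i : Fin r => K i x) with hS
  have hΔS : ∀ x, Δ x ≤ S x := fun x => le_sup_left
  have hKS : ∀ (j : Fin r) (x : E), K j x ∈ S x := fun j x =>
    Submodule.mem_sup_right (Submodule.subset_span ⟨j, rfl⟩)
  -- smoothness of the β and α components
  have hβij : ∀ i j : Fin r, ContDiff ℝ (⊤ : ℕ∞) (fun y => β y i j) := fun i j =>
    contDiff_pi.mp (contDiff_pi.mp hβ i) j
  have hαj : ∀ j : Fin r, ContDiff ℝ (⊤ : ℕ∞) (fun y => α y j) := fun j =>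
    contDiff_pi.mp hα j
  -- Step 1: the brackets with the K i lie in S
  have step1 : ∀ (l : Fin r) (x : E), lieBracketVF (K l) τ x ∈ S x := by
    intro l x
    set v : Fin r → E := fun j => lieBracketVF (K j) τ x with hv
    have h1 : ∀ i : Fin r, ∑ j, β x i j • v j ∈ S x := by
      intro i
      have hb : lieBracketVF (Kc i) τ x
          = ∑ j, (β x i j • v j - (fderiv ℝ (fun y => β y i j) x (τ x)) • K j x) := by
        rw [hKc i, bracket_combo (fun j y => β y i j) K (hβij i) hK τ hτ x]
      have hmem' : lieBracketVF (Kc i) τ x ∈ Δ x := hinv τ hτ hmem i x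
      have : ∑ j, β x i j • v j
          = lieBracketVF (Kc i) τ x
            + ∑ j, (fderiv ℝ (fun y => β y i j) x (τ x)) • K j x := by
        rw [hb, ← Finset.sum_add_distrib]
        exact Finset.sum_congr rfl fun j _ => by abel
      rw [this]
      exact (S x).add_mem (hΔS x hmem')
        ((S x).sum_mem fun j _ => (S x).smul_mem _ (hKS j x))
    -- invert β
    have hdet : IsUnit (Matrix.of (β x)).det :=
      (Matrix.isUnit_iff_isUnit_det _).mp (hβinv x)
    set B : Matrix (Fin r) (Fin r) ℝ := Matrix.of (β x) with hB
    have hvl : v l = ∑ i, B⁻¹ l i • ∑ j, β x i j • v j := by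
      have : ∀ i j, β x i j = B i j := fun i j => rfl
      calc v l = ∑ j, ((B⁻¹ * B) l j) • v j := by
            rw [Matrix.nonsing_inv_mul B hdet]
            simp [Matrix.one_apply]
        _ = ∑ i, B⁻¹ l i • ∑ j, β x i j • v j := by
            simp only [this, Matrix.mul_apply, Finset.smul_sum, Finset.sum_smul, smul_smul]
            rw [Finset.sum_comm]
    show v l ∈ S x
    rw [hvl]
    exact (S x).sum_mem fun i _ => (S x).smul_mem _ (h1 i)
  refine ⟨?_, step1⟩
  -- Step 2: the bracket with K0 lies in S
  intro x
  have hW : ∀ j : Fin r, DifferentiableAt ℝ (fun y => α y j • K j y) x := fun j =>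
    ((hαj j).differentiable (by simp) x).smul ((hK j).differentiable (by simp) x)
  have hb0 : lieBracketVF Kc0 τ x
      = lieBracketVF K0 τ x
        + ∑ j, (α x j • lieBracketVF (K j) τ x
            - (fderiv ℝ (fun y => α y j) x (τ x)) • K j x) := by
    rw [hKc0,
      bracket_add K0 (fun y => ∑ j, α y j • K j y) τ x (hK0.differentiable (by simp) x)
        (DifferentiableAt.fun_sum fun j _ => hW j),
      bracket_combo (fun j y => α y j) K hαj hK τ hτ x]
  have : lieBracketVF K0 τ x
      = lieBracketVF Kc0 τ x
        - ∑ j, (α x j • lieBracketVF (K j) τ x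
            - (fderiv ℝ (fun y => α y j) x (τ x)) • K j x) := by
    rw [hb0]; abel
  rw [this]
  refine (S x).sub_mem (hΔS x (hinv0 τ hτ hmem x)) ((S x).sum_mem fun j _ => ?_)
  exact (S x).sub_mem ((S x).smul_mem _ (step1 j x)) ((S x).smul_mem _ (hKS j x))
end

section
/- Let c_1, c_2 ∈ ℂ with (c_1, c_2) ≠ (0,0) and let t ∈ ℝ with sin t ≠ 0. Then exp(−it(σ_x⊗I_2)) (c_1|01⟩ + c_2|10⟩) does not lie in the subspace span_ℂ{|01⟩, |10⟩} of ℂ⁴. (Explicitly, exp(−it(σ_x⊗I_2))(c_1|01⟩ + c_2|10⟩) = c_1 cos t |01⟩ − i c_1 sin t |11⟩ + c_2 cos t |10⟩ − i c_2 sin t |00⟩.) -/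
open Matrix NormedSpace
open scoped Kronecker

noncomputable section

def σx : Matrix (Fin 2) (Fin 2) ℂ := !![0, 1; 1, 0]

def ket0 : Fin 2 → ℂ := ![1, 0]
def ket1 : Fin 2 → ℂ := ![0, 1]

def ket00 : Fin 2 × Fin 2 → ℂ := fun p => ket0 p.1 * ket0 p.2
def ket01 : Fin 2 × Fin 2 → ℂ := fun p => ket0 p.1 * ket1 p.2
def ket10 : Fin 2 × Fin 2 → ℂ := fun p => ket1 p.1 * ket0 p.2
def ket11 : Fin 2 × Fin 2 → ℂ := fun p => ket1 p.1 * ket1 p.2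

/-!
Since `(σx ⊗ I₂)² = 1`, the exponential series splits into even and odd parts, giving
`exp(-it (σx ⊗ I₂)) = cos t - i sin t (σx ⊗ I₂)`. The operator `σx ⊗ I₂` maps `|01⟩ ↦ |11⟩` and
`|10⟩ ↦ |00⟩`, so the evolved state has `|00⟩`- and `|11⟩`-components `-i c₂ sin t` and
`-i c₁ sin t`; every vector of `span{|01⟩, |10⟩}` has both of these components zero.
-/

section Involution

variable {𝔸 : Type*} [NormedRing 𝔸] [NormedAlgebra ℂ 𝔸] [CompleteSpace 𝔸] {a : 𝔸}

theorem NormedSpace.exp_smul_of_mul_self_eq_one (ha : a * a = 1) (z : ℂ) :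
    exp (z • a) = Complex.cosh z • (1 : 𝔸) + Complex.sinh z • a := by
  have hpow (n : ℕ) : a ^ (2 * n) = 1 := by rw [pow_mul, sq, ha, one_pow]
  refine (exp_series_hasSum_exp' (𝕂 := ℂ) (z • a)).unique (HasSum.even_add_odd ?_ ?_)
  · convert (Complex.hasSum_cosh z).smul_const (1 : 𝔸) using 2 with n
    rw [smul_pow, hpow, smul_smul, div_eq_inv_mul]
  · convert (Complex.hasSum_sinh z).smul_const a using 2 with n
    rw [smul_pow, pow_succ a, hpow, one_mul, smul_smul, div_eq_inv_mul]

theorem NormedSpace.exp_neg_I_mul_smul_of_mul_self_eq_one (ha : a * a = 1) (t : ℂ) :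
    exp ((-Complex.I * t) • a) = Complex.cos t • (1 : 𝔸) - (Complex.I * Complex.sin t) • a := by
  rw [exp_smul_of_mul_self_eq_one ha, neg_mul, mul_comm, ← neg_mul, Complex.cosh_mul_I,
    Complex.sinh_mul_I, Complex.cos_neg, Complex.sin_neg, sub_eq_add_neg, ← neg_smul]
  ring_nf

end Involution

theorem Matrix.kronecker_mulVec_mul {l m n p α : Type*} [Fintype m] [Fintype p] [CommSemiring α]
    (A : Matrix l m α) (B : Matrix n p α) (u : m → α) (v : p → α) :
    (A ⊗ₖ B) *ᵥ (fun q => u q.1 * v q.2) = fun q => (A *ᵥ u) q.1 * (B *ᵥ v) q.2 := by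
  ext ⟨i, j⟩
  simp only [mulVec, dotProduct, kroneckerMap_apply, Fintype.sum_prod_type, Finset.sum_mul_sum]
  exact Finset.sum_congr rfl fun _ _ => Finset.sum_congr rfl fun _ _ => by ring

theorem σx_mul_self : σx * σx = 1 := by
  ext i j
  fin_cases i <;> fin_cases j <;> simp [σx]

theorem σx_mulVec_ket0 : σx *ᵥ ket0 = ket1 := by
  ext i
  fin_cases i <;> simp [σx, ket0, ket1]

theorem σx_mulVec_ket1 : σx *ᵥ ket1 = ket0 := by
  ext i
  fin_cases i <;> simp [σx, ket0, ket1]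

theorem σx_kronecker_one_mul_self :
    (σx ⊗ₖ (1 : Matrix (Fin 2) (Fin 2) ℂ)) * (σx ⊗ₖ 1) = 1 := by
  rw [← mul_kronecker_mul, σx_mul_self, Matrix.one_mul, one_kronecker_one]

theorem σx_kronecker_one_mulVec_ket01 :
    (σx ⊗ₖ (1 : Matrix (Fin 2) (Fin 2) ℂ)) *ᵥ ket01 = ket11 := by
  unfold ket01 ket11
  rw [kronecker_mulVec_mul, σx_mulVec_ket0, one_mulVec]

theorem σx_kronecker_one_mulVec_ket10 :
    (σx ⊗ₖ (1 : Matrix (Fin 2) (Fin 2) ℂ)) *ᵥ ket10 = ket00 := by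
  unfold ket10 ket00
  rw [kronecker_mulVec_mul, σx_mulVec_ket1, one_mulVec]

attribute [local instance] Matrix.linftyOpNormedRing Matrix.linftyOpNormedAlgebra in
theorem exp_σx_kronecker_one (t : ℝ) :
    exp ((-Complex.I * (t : ℂ)) • (σx ⊗ₖ (1 : Matrix (Fin 2) (Fin 2) ℂ))) =
      Complex.cos t • 1 - (Complex.I * Complex.sin t) • (σx ⊗ₖ 1) :=
  exp_neg_I_mul_smul_of_mul_self_eq_one σx_kronecker_one_mul_self t

theorem exp_σx_kronecker_one_mulVec (c₁ c₂ : ℂ) (t : ℝ) :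
    (exp ((-Complex.I * (t : ℂ)) •
          (σx ⊗ₖ (1 : Matrix (Fin 2) (Fin 2) ℂ)))).mulVec (c₁ • ket01 + c₂ • ket10) =
        (c₁ * Real.cos t) • ket01 - (Complex.I * c₁ * Real.sin t) • ket11
          + (c₂ * Real.cos t) • ket10 - (Complex.I * c₂ * Real.sin t) • ket00 := by
  rw [exp_σx_kronecker_one, sub_mulVec, smul_mulVec, smul_mulVec, one_mulVec, mulVec_add,
    mulVec_smul, mulVec_smul, σx_kronecker_one_mulVec_ket01, σx_kronecker_one_mulVec_ket10,
    Complex.ofReal_cos, Complex.ofReal_sin]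
  module

theorem apply_self_self_eq_zero_of_mem_span_ket01_ket10 {v : Fin 2 × Fin 2 → ℂ}
    (hv : v ∈ Submodule.span ℂ ({ket01, ket10} : Set (Fin 2 × Fin 2 → ℂ))) (i : Fin 2) :
    v (i, i) = 0 := by
  obtain ⟨a, b, rfl⟩ := Submodule.mem_span_pair.mp hv
  fin_cases i <;> simp [ket01, ket10, ket0, ket1]

/-- A control Hamiltonian `σ_x` on the first qubit drives any nonzero state of the
decoherence-free subspace `span{|01⟩,|10⟩}` out of that subspace whenever `sin t ≠ 0`. -/
theorem control_drives_state_out_of_dfs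
    (c₁ c₂ : ℂ) (hc : ¬(c₁ = 0 ∧ c₂ = 0)) (t : ℝ) (ht : Real.sin t ≠ 0) :
    (exp ((-Complex.I * (t : ℂ)) •
          (σx ⊗ₖ (1 : Matrix (Fin 2) (Fin 2) ℂ)))).mulVec (c₁ • ket01 + c₂ • ket10) =
        (c₁ * Real.cos t) • ket01 - (Complex.I * c₁ * Real.sin t) • ket11
          + (c₂ * Real.cos t) • ket10 - (Complex.I * c₂ * Real.sin t) • ket00 ∧
      (exp ((-Complex.I * (t : ℂ)) •
          (σx ⊗ₖ (1 : Matrix (Fin 2) (Fin 2) ℂ)))).mulVec (c₁ • ket01 + c₂ • ket10) ∉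
        Submodule.span ℂ ({ket01, ket10} : Set (Fin 2 × Fin 2 → ℂ)) := by
  refine ⟨exp_σx_kronecker_one_mulVec c₁ c₂ t, fun hspan => hc ?_⟩
  rw [exp_σx_kronecker_one_mulVec] at hspan
  have hsin : Complex.sin t ≠ 0 := mod_cast ht
  constructor
  · simpa [ket00, ket01, ket10, ket11, ket0, ket1, hsin] using
      apply_self_self_eq_zero_of_mem_span_ket01_ket10 hspan 1
  · simpa [ket00, ket01, ket10, ket11, ket0, ket1, hsin] using
      apply_self_self_eq_zero_of_mem_span_ket01_ket10 hspan 0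

end
end
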